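/- Let M > 0 and let g ∈ X₁ be continuously differentiable on ℝ ∖ {0} with ‖g‖_∞ ≤ M and |x · g'(x)| ≤ M for all x ≠ 0. Define B(x) = κ / (x · h⁻¹(x) · ((h⁻¹)'(x))²) for x ≠ 0. Then there is a constant c(μ,ν,M) depending only on μ, ν, M such that |B'(x)/(h⁻¹)'(x)| ≤ c(μ,ν,M) |x|^(1−4ν) for 0 < |x| ≤ 1, and |B'(x)/(h⁻¹)'(x)| ≤ c(μ,ν,M) |x|^(1−4μ) for |x| ≥ 1. -/

import Mathlib

open MeasureTheory Real Filter Set Bornology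

/-- `h⁻¹(x) = ∫₀ˣ |y|^(ν−1)(y²+1)^((μ−ν)/2) e^(g(y)) dy`. -/
noncomputable def hInv (μ ν : ℝ) (g : ℝ → ℝ) (x : ℝ) : ℝ :=
  ∫ y in (0:ℝ)..x, |y| ^ (ν - 1) * (y ^ 2 + 1) ^ ((μ - ν) / 2) * Real.exp (g y)

/-- `(h⁻¹)'(x) = |x|^(ν−1)(x²+1)^((μ−ν)/2) e^(g(x))`. -/
noncomputable def hInvDeriv (μ ν : ℝ) (g : ℝ → ℝ) (x : ℝ) : ℝ :=
  |x| ^ (ν - 1) * (x ^ 2 + 1) ^ ((μ - ν) / 2) * Real.exp (g x)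

/-- The constant `κ = κ(g)` determined by `∫_ℝ κ/(x h⁻¹(x) (h⁻¹)'(x)) dx = (μ−ν)π`. -/
noncomputable def kappa (μ ν : ℝ) (g : ℝ → ℝ) : ℝ :=
  (μ - ν) * Real.pi / ∫ x : ℝ, 1 / (x * hInv μ ν g x * hInvDeriv μ ν g x)

/-- `F'(x) = κ/(x h⁻¹(x) (h⁻¹)'(x))`. -/
noncomputable def Fder (μ ν : ℝ) (g : ℝ → ℝ) (x : ℝ) : ℝ :=
  kappa μ ν g / (x * hInv μ ν g x * hInvDeriv μ ν g x)

/-- `F = F_g`, the antiderivative of `Fder` with `F(+∞) = 0`. -/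
noncomputable def Fg (μ ν : ℝ) (g : ℝ → ℝ) (x : ℝ) : ℝ :=
  -∫ y in Set.Ioi x, Fder μ ν g y

/-- `θ(x)`: the continuous branch of `arg (x − i)`, i.e. `arctan(−1/x)` for `x > 0`,
`arctan(−1/x) − π` for `x < 0`, and `−π/2` at `x = 0`. -/
noncomputable def theta (x : ℝ) : ℝ :=
  if x = 0 then -(Real.pi / 2)
  else if x < 0 then Real.arctan (-1 / x) - Real.pi
  else Real.arctan (-1 / x)

/-- `HasHilbertAt f x v`: the principal value `(1/π) lim_{ε→0⁺} ∫_{|x−y|>ε} f(y)/(x−y) dy`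
exists and equals `v`. -/
def HasHilbertAt (f : ℝ → ℝ) (x v : ℝ) : Prop :=
  Filter.Tendsto
    (fun ε : ℝ => (1 / Real.pi) * ∫ y in {y : ℝ | ε < |x - y|}, f y / (x - y))
    (nhdsWithin 0 (Set.Ioi 0)) (nhds v)

/-- `G(x) = g(x) + (1/2)(μ−ν) ln(x²+1)`. -/
noncomputable def Gfun (μ ν : ℝ) (g : ℝ → ℝ) (x : ℝ) : ℝ :=
  g x + (1 / 2) * (μ - ν) * Real.log (x ^ 2 + 1)

/-- `g` is a solution of system (3.12): `g` is bounded and continuous, the principal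
value `T[g](x) = H(F_g − (μ−ν)θ)(x)` exists for every `x`, and `g = T[g]`. -/
def IsSolution (μ ν : ℝ) (g : ℝ → ℝ) : Prop :=
  Continuous g ∧ (∃ M : ℝ, ∀ x, |g x| ≤ M) ∧
    ∀ x : ℝ, HasHilbertAt (fun y => Fg μ ν g y - (μ - ν) * theta y) x (g x)
/-- `B(x) = κ/(x h⁻¹(x) ((h⁻¹)'(x))²)`, i.e. `B = F'/(h⁻¹)' = b' ∘ h⁻¹`. -/
noncomputable def Bfun (μ ν : ℝ) (g : ℝ → ℝ) (x : ℝ) : ℝ :=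
  kappa μ ν g / (x * hInv μ ν g x * (hInvDeriv μ ν g x) ^ 2)

/-!
For `x > 0` write `H = h⁻¹` and `D = (h⁻¹)'`. Since `D' = D ψ` with `|x ψ(x)| ≤ 3 + M`,
differentiating `B = κ / (x H D²)` gives
`B' / D = -κ ((1 + 2 x ψ) / (x² H D³) + 1 / (x H² D²))`,
so only lower bounds on `H` and `D` are needed. For every `p ∈ [ν, μ]` one has
`D(y) ≥ e^(-M) y^(p-1)`, hence `H(x) ≥ e^(-M) x^p / p`, and both terms are `≲ κ x^(1-4p)`;
take `p = ν` for `|x| ≤ 1` and `p = μ` for `|x| ≥ 1`. The constant `κ` is bounded by bounding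
its normalising integral from below on `[1, 2]`, and negative `x` reduce to positive ones since
`g` is even, so that `D` is even and `H` is odd.
-/

lemma rpow_le_sq_add_one_rpow {y s t : ℝ} (hy : 0 < y) (hs : 0 ≤ s) (hst : s ≤ t) :
    y ^ s ≤ (y ^ 2 + 1) ^ (t / 2) :=
  calc y ^ s = (y ^ 2) ^ (s / 2) := by
        rw [← rpow_natCast, ← rpow_mul hy.le]; ring_nf
    _ ≤ (y ^ 2 + 1) ^ (s / 2) := by gcongr; linarith
    _ ≤ (y ^ 2 + 1) ^ (t / 2) := rpow_le_rpow_of_exponent_le (by nlinarith) (by linarith)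

lemma intervalIntegral_mul_rpow_sub_one {b p x : ℝ} (hp : 0 < p) :
    ∫ y in (0 : ℝ)..x, b * y ^ (p - 1) = b * x ^ p / p := by
  rw [intervalIntegral.integral_const_mul, integral_rpow (Or.inl (by linarith)),
    sub_add_cancel, zero_rpow hp.ne', sub_zero, mul_div_assoc]

lemma mul_rpow_div_le_intervalIntegral {f : ℝ → ℝ} {b p x : ℝ} (hp : 0 < p) (hx : 0 ≤ x)
    (hf : IntervalIntegrable f volume 0 x) (hb : ∀ y ∈ Ioo 0 x, b * y ^ (p - 1) ≤ f y) :
    b * x ^ p / p ≤ ∫ y in (0 : ℝ)..x, f y := by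
  rw [← intervalIntegral_mul_rpow_sub_one hp]
  exact intervalIntegral.integral_mono_on_of_le_Ioo hx
    ((intervalIntegral.intervalIntegrable_rpow' (by linarith)).const_mul _) hf hb

lemma intervalIntegral_le_mul_rpow_div {f : ℝ → ℝ} {b p x : ℝ} (hp : 0 < p) (hx : 0 ≤ x)
    (hf : IntervalIntegrable f volume 0 x) (hb : ∀ y ∈ Ioo 0 x, f y ≤ b * y ^ (p - 1)) :
    ∫ y in (0 : ℝ)..x, f y ≤ b * x ^ p / p := by
  rw [← intervalIntegral_mul_rpow_sub_one hp]
  exact intervalIntegral.integral_mono_on_of_le_Ioo hx hf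
    ((intervalIntegral.intervalIntegrable_rpow' (by linarith)).const_mul _) hb

lemma rpow_one_sub_four_mul_mul_pow_eq_one {x p : ℝ} (hx : 0 < x) :
    x ^ (1 - 4 * p) * (x ^ 3 * (x ^ (p - 1)) ^ 4) = 1 := by
  rw [← rpow_natCast, ← rpow_natCast, ← rpow_mul hx.le, ← rpow_add hx, ← rpow_add hx]
  norm_num [show 1 - 4 * p + (3 + (p - 1) * 4) = 0 by ring]

lemma deriv_div_mul_mul_sq_div {H D : ℝ → ℝ} {κ x ψ : ℝ} (hH : HasDerivAt H (D x) x)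
    (hD : HasDerivAt D (D x * ψ) x) (hx : x ≠ 0) (hHx : H x ≠ 0) (hDx : D x ≠ 0) :
    deriv (fun y => κ / (y * H y * D y ^ 2)) x / D x =
      -κ * ((1 + 2 * (x * ψ)) / (x ^ 2 * H x * D x ^ 3) + 1 / (x * H x ^ 2 * D x ^ 2)) := by
  have hW := ((hasDerivAt_id' x).fun_mul hH).fun_mul (hD.fun_pow 2)
  rw [((hasDerivAt_const x κ).fun_div hW (by simp [hx, hHx, hDx])).deriv]
  field_simp
  ring

lemma abs_neg_mul_add_div_le {κ x p a b m H D s : ℝ} (hκ : 0 ≤ κ) (hx : 0 < x) (ha : 0 < a)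
    (hb : 0 < b) (hH : a * x ^ p ≤ H) (hD : b * x ^ (p - 1) ≤ D) (hs : |s| ≤ m) :
    |-κ * ((1 + 2 * s) / (x ^ 2 * H * D ^ 3) + 1 / (x * H ^ 2 * D ^ 2))| ≤
      κ * ((1 + 2 * m) / (a * b ^ 3) + 1 / (a ^ 2 * b ^ 2)) * x ^ (1 - 4 * p) := by
  have ht : 0 < x ^ (p - 1) := rpow_pos_of_pos hx _
  have hxp : x ^ p = x * x ^ (p - 1) := by
    simpa only [rpow_one, add_sub_cancel] using rpow_add hx 1 (p - 1)
  rw [hxp] at hH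
  have hH0 : 0 < H := lt_of_lt_of_le (by positivity) hH
  have hD0 : 0 < D := lt_of_lt_of_le (by positivity) hD
  have h1s : |1 + 2 * s| ≤ 1 + 2 * m := by
    have := abs_add_le 1 (2 * s)
    rw [abs_mul, abs_one, abs_two] at this
    linarith
  rw [abs_mul, abs_neg, abs_of_nonneg hκ, mul_assoc κ]
  refine mul_le_mul_of_nonneg_left ?_ hκ
  calc |(1 + 2 * s) / (x ^ 2 * H * D ^ 3) + 1 / (x * H ^ 2 * D ^ 2)|
      ≤ (1 + 2 * m) / (x ^ 2 * H * D ^ 3) + 1 / (x * H ^ 2 * D ^ 2) := by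
        refine (abs_add_le _ _).trans ?_
        rw [abs_div, abs_of_pos (by positivity : 0 < x ^ 2 * H * D ^ 3),
          abs_of_pos (by positivity : 0 < 1 / (x * H ^ 2 * D ^ 2))]
        gcongr
    _ ≤ (1 + 2 * m) / (x ^ 2 * (a * (x * x ^ (p - 1))) * (b * x ^ (p - 1)) ^ 3)
          + 1 / (x * (a * (x * x ^ (p - 1))) ^ 2 * (b * x ^ (p - 1)) ^ 2) := by
        have : 0 ≤ 1 + 2 * m := (abs_nonneg _).trans h1s
        gcongr
    _ = ((1 + 2 * m) / (a * b ^ 3) + 1 / (a ^ 2 * b ^ 2)) * x ^ (1 - 4 * p) := by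
        have := rpow_one_sub_four_mul_mul_pow_eq_one (p := p) hx
        generalize x ^ (1 - 4 * p) = r at this ⊢
        field_simp
        linear_combination (-(1 + 2 * m) * a - b) * this

section Weight

variable {μ ν M : ℝ} {g : ℝ → ℝ}

lemma hInvDeriv_nonneg (x : ℝ) : 0 ≤ hInvDeriv μ ν g x := by
  unfold hInvDeriv; positivity

lemma hInvDeriv_pos {x : ℝ} (hx : x ≠ 0) : 0 < hInvDeriv μ ν g x := by
  have := abs_pos.2 hx
  unfold hInvDeriv; positivity

lemma measurable_hInvDeriv (hg : Measurable g) : Measurable (hInvDeriv μ ν g) := by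
  unfold hInvDeriv; fun_prop

lemma exp_neg_mul_rpow_le_hInvDeriv {p y : ℝ} (hνp : ν ≤ p) (hpμ : p ≤ μ)
    (hgM : ∀ x, |g x| ≤ M) (hy : 0 < y) : exp (-M) * y ^ (p - 1) ≤ hInvDeriv μ ν g y := by
  have hsplit : y ^ (p - 1) = y ^ (ν - 1) * y ^ (p - ν) := by
    rw [← rpow_add hy]; ring_nf
  have hw := rpow_le_sq_add_one_rpow hy (sub_nonneg.2 hνp) (sub_le_sub_right hpμ ν)
  have he : exp (-M) ≤ exp (g y) := exp_le_exp.2 (neg_le_of_abs_le (hgM y))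
  rw [hInvDeriv, abs_of_pos hy, hsplit, mul_comm]
  gcongr

lemma hInvDeriv_le {R y : ℝ} (hνμ : ν ≤ μ) (hgM : ∀ x, |g x| ≤ M) (hy : 0 < y) (hyR : y ≤ R) :
    hInvDeriv μ ν g y ≤ exp M * (R ^ 2 + 1) ^ ((μ - ν) / 2) * y ^ (ν - 1) := by
  have he : exp (g y) ≤ exp M := exp_le_exp.2 (le_of_abs_le (hgM y))
  have hR : y ^ 2 + 1 ≤ R ^ 2 + 1 := by nlinarith
  calc hInvDeriv μ ν g y = y ^ (ν - 1) * (y ^ 2 + 1) ^ ((μ - ν) / 2) * exp (g y) := by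
        rw [hInvDeriv, abs_of_pos hy]
    _ ≤ y ^ (ν - 1) * (R ^ 2 + 1) ^ ((μ - ν) / 2) * exp M := by
        gcongr
    _ = exp M * (R ^ 2 + 1) ^ ((μ - ν) / 2) * y ^ (ν - 1) := by ring

lemma intervalIntegrable_hInvDeriv {x : ℝ} (hν : 0 < ν) (hνμ : ν ≤ μ) (hg : Measurable g)
    (hgM : ∀ x, |g x| ≤ M) (hx : 0 ≤ x) : IntervalIntegrable (hInvDeriv μ ν g) volume 0 x := by
  refine ((intervalIntegral.intervalIntegrable_rpow' (r := ν - 1) (by linarith)).const_mul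
    (exp M * (x ^ 2 + 1) ^ ((μ - ν) / 2))).mono_fun'
    (measurable_hInvDeriv hg).aestronglyMeasurable ?_
  rw [uIoc_of_le hx]
  filter_upwards [ae_restrict_mem measurableSet_Ioc] with y hy
  rw [norm_of_nonneg (hInvDeriv_nonneg y)]
  exact hInvDeriv_le hνμ hgM hy.1 hy.2

lemma hasDerivAt_hInvDeriv {x : ℝ} (hx : 0 < x) (hg : DifferentiableAt ℝ g x) :
    HasDerivAt (hInvDeriv μ ν g)
      (hInvDeriv μ ν g x * ((ν - 1) / x + (μ - ν) * x / (x ^ 2 + 1) + deriv g x)) x := by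
  have hx2 : 0 < x ^ 2 + 1 := by positivity
  have hprod := ((hasDerivAt_rpow_const (p := ν - 1) (Or.inl hx.ne')).fun_mul
    ((((hasDerivAt_pow 2 x).add_const 1).rpow_const (p := (μ - ν) / 2)
      (Or.inl hx2.ne')))).fun_mul hg.hasDerivAt.exp
  have heq : hInvDeriv μ ν g =ᶠ[nhds x]
      fun y => y ^ (ν - 1) * (y ^ 2 + 1) ^ ((μ - ν) / 2) * exp (g y) := by
    filter_upwards [lt_mem_nhds hx] with y hy
    rw [hInvDeriv, abs_of_pos hy]
  refine (hprod.congr_deriv ?_).congr_of_eventuallyEq heq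
  rw [hInvDeriv, abs_of_pos hx, rpow_sub_one hx.ne', rpow_sub_one hx.ne',
    rpow_sub_one hx2.ne']
  field_simp
  ring

lemma hasDerivAt_hInv {x : ℝ} (hν : 0 < ν) (hνμ : ν ≤ μ) (hg : Measurable g)
    (hgM : ∀ x, |g x| ≤ M) (hx : 0 < x) (hgx : DifferentiableAt ℝ g x) :
    HasDerivAt (hInv μ ν g) (hInvDeriv μ ν g x) x :=
  intervalIntegral.integral_hasDerivAt_right (intervalIntegrable_hInvDeriv hν hνμ hg hgM hx.le)
    (measurable_hInvDeriv hg).stronglyMeasurable.stronglyMeasurableAtFilter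
    (hasDerivAt_hInvDeriv hx hgx).continuousAt

lemma le_hInv {p x : ℝ} (hν : 0 < ν) (hνp : ν ≤ p) (hpμ : p ≤ μ) (hg : Measurable g)
    (hgM : ∀ x, |g x| ≤ M) (hx : 0 < x) : exp (-M) * x ^ p / p ≤ hInv μ ν g x :=
  mul_rpow_div_le_intervalIntegral (by linarith) hx.le
    (intervalIntegrable_hInvDeriv hν (hνp.trans hpμ) hg hgM hx.le)
    fun _ hy => exp_neg_mul_rpow_le_hInvDeriv hνp hpμ hgM hy.1

lemma hInv_le {R x : ℝ} (hν : 0 < ν) (hνμ : ν ≤ μ) (hg : Measurable g)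
    (hgM : ∀ x, |g x| ≤ M) (hx : 0 ≤ x) (hxR : x ≤ R) :
    hInv μ ν g x ≤ exp M * (R ^ 2 + 1) ^ ((μ - ν) / 2) * x ^ ν / ν :=
  intervalIntegral_le_mul_rpow_div hν hx (intervalIntegrable_hInvDeriv hν hνμ hg hgM hx)
    fun _ hy => hInvDeriv_le hνμ hgM hy.1 (hy.2.le.trans hxR)

lemma mul_hInv_nonneg (x : ℝ) : 0 ≤ x * hInv μ ν g x := by
  rcases le_total 0 x with hx | hx
  · exact mul_nonneg hx (intervalIntegral.integral_nonneg hx fun u _ => hInvDeriv_nonneg u)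
  · refine mul_nonneg_of_nonpos_of_nonpos hx ?_
    rw [hInv, intervalIntegral.integral_symm, neg_nonpos]
    exact intervalIntegral.integral_nonneg hx fun u _ => hInvDeriv_nonneg u

end Weight

section Kappa

noncomputable def kappaBound (μ ν M : ℝ) : ℝ :=
  (μ - ν) * π * (4 * (exp M * 5 ^ ((μ - ν) / 2)) ^ 2 / ν)

variable {μ ν M : ℝ} {g : ℝ → ℝ}

lemma kappa_nonneg (hνμ : ν ≤ μ) : 0 ≤ kappa μ ν g :=
  div_nonneg (mul_nonneg (sub_nonneg.2 hνμ) pi_pos.le) <| integral_nonneg fun x =>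
    one_div_nonneg.2 (mul_nonneg (mul_hInv_nonneg x) (hInvDeriv_nonneg x))

lemma le_one_div_mul_hInv_mul_hInvDeriv {y : ℝ} (hν : 0 < ν) (hν1 : ν ≤ 1) (hνμ : ν ≤ μ)
    (hg : Measurable g) (hgM : ∀ x, |g x| ≤ M) (hy1 : 1 < y) (hy2 : y ≤ 2) :
    ν / (4 * (exp M * 5 ^ ((μ - ν) / 2)) ^ 2) ≤
      1 / (y * hInv μ ν g y * hInvDeriv μ ν g y) := by
  set C := exp M * 5 ^ ((μ - ν) / 2)
  have hC : 0 < C := by positivity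
  have hy : 0 < y := by linarith
  have hH0 : 0 < hInv μ ν g y := lt_of_lt_of_le (by positivity) (le_hInv hν le_rfl hνμ hg hgM hy)
  have hD0 : 0 < hInvDeriv μ ν g y := hInvDeriv_pos hy.ne'
  have hH : hInv μ ν g y ≤ 2 * C / ν := by
    have hyν : y ^ ν ≤ 2 := (rpow_le_self_of_one_le hy1.le hν1).trans hy2
    calc hInv μ ν g y ≤ C * y ^ ν / ν := by
          simpa [C, show (2 : ℝ) ^ 2 + 1 = 5 by norm_num] using hInv_le hν hνμ hg hgM hy.le hy2
      _ ≤ 2 * C / ν := by rw [mul_comm 2 C]; gcongr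
  have hD : hInvDeriv μ ν g y ≤ C := by
    have hyν : y ^ (ν - 1) ≤ 1 := rpow_le_one_of_one_le_of_nonpos hy1.le (by linarith)
    calc hInvDeriv μ ν g y ≤ C * y ^ (ν - 1) := by
          simpa [C, show (2 : ℝ) ^ 2 + 1 = 5 by norm_num] using hInvDeriv_le hνμ hgM hy hy2
      _ ≤ C := mul_le_of_le_one_right hC.le hyν
  calc ν / (4 * C ^ 2) = 1 / (2 * (2 * C / ν) * C) := by field_simp; ring
    _ ≤ 1 / (y * hInv μ ν g y * hInvDeriv μ ν g y) := by gcongr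

lemma kappa_le (hν : 0 < ν) (hν1 : ν ≤ 1) (hνμ : ν ≤ μ) (hg : Measurable g)
    (hgM : ∀ x, |g x| ≤ M) : kappa μ ν g ≤ kappaBound μ ν M := by
  set f : ℝ → ℝ := fun x => 1 / (x * hInv μ ν g x * hInvDeriv μ ν g x)
  set c := ν / (4 * (exp M * 5 ^ ((μ - ν) / 2)) ^ 2)
  have hf_nonneg : ∀ x, 0 ≤ f x := fun x =>
    one_div_nonneg.2 (mul_nonneg (mul_hInv_nonneg x) (hInvDeriv_nonneg x))
  by_cases hint : Integrable f
  · have hI : c ≤ ∫ x, f x := by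
      have h12 := setIntegral_ge_of_const_le_real measurableSet_Ioc (by simp)
        (fun y hy => le_one_div_mul_hInv_mul_hInvDeriv hν hν1 hνμ hg hgM hy.1 hy.2)
        hint.integrableOn
      rw [Measure.real, Real.volume_Ioc, show (2 : ℝ) - 1 = 1 by norm_num,
        ENNReal.toReal_ofReal zero_le_one, mul_one] at h12
      exact h12.trans (setIntegral_le_integral hint (Eventually.of_forall hf_nonneg))
    calc kappa μ ν g ≤ (μ - ν) * π / c :=
          div_le_div_of_nonneg_left (by nlinarith [pi_pos]) (by positivity) hI
      _ = kappaBound μ ν M := by rw [kappaBound, div_div_eq_mul_div, mul_div_assoc]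
  · -- a non-integrable integrand has Bochner integral `0`, and then `κ = 0`
    rw [kappa, integral_undef hint, div_zero, kappaBound]
    have : 0 ≤ μ - ν := sub_nonneg.2 hνμ
    positivity

end Kappa

section Symmetry

variable {μ ν : ℝ} {g : ℝ → ℝ}

lemma even_of_Gfun_even (hG : ∀ x, Gfun μ ν g (-x) = Gfun μ ν g x) (x : ℝ) : g (-x) = g x := by
  have := hG x
  rw [Gfun, Gfun, neg_sq] at this
  linarith

variable (hg : ∀ x, g (-x) = g x)
include hg

lemma hInvDeriv_neg (x : ℝ) : hInvDeriv μ ν g (-x) = hInvDeriv μ ν g x := by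
  rw [hInvDeriv, hInvDeriv, abs_neg, hg, neg_sq]

lemma hInv_neg (x : ℝ) : hInv μ ν g (-x) = -hInv μ ν g x := by
  have h := intervalIntegral.integral_comp_neg (a := 0) (b := x) (hInvDeriv μ ν g)
  simp only [hInvDeriv_neg hg, neg_zero] at h
  change ∫ y in (0 : ℝ)..-x, hInvDeriv μ ν g y = -∫ y in (0 : ℝ)..x, hInvDeriv μ ν g y
  rw [h, intervalIntegral.integral_symm]

lemma abs_deriv_Bfun_div_hInvDeriv_neg (x : ℝ) :
    |deriv (Bfun μ ν g) (-x) / hInvDeriv μ ν g (-x)| =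
      |deriv (Bfun μ ν g) x / hInvDeriv μ ν g x| := by
  have hB : Bfun μ ν g = fun y => Bfun μ ν g (-y) := by
    funext y
    rw [Bfun, Bfun, hInv_neg hg, hInvDeriv_neg hg]
    ring
  rw [hB, deriv_comp_neg, neg_neg, ← hB, hInvDeriv_neg hg, neg_div, abs_neg]

end Symmetry

section Derivative

variable {μ ν M : ℝ} {g : ℝ → ℝ}

lemma abs_mul_logDeriv_hInvDeriv_le {x : ℝ} (hν : 0 < ν) (hνμ : ν ≤ μ) (hμ : μ ≤ 2)
    (hx : 0 < x) (hxg : |x * deriv g x| ≤ M) :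
    |x * ((ν - 1) / x + (μ - ν) * x / (x ^ 2 + 1) + deriv g x)| ≤ 3 + M := by
  have hfrac : x ^ 2 / (x ^ 2 + 1) ≤ 1 := div_le_one_of_le₀ (by linarith) (by positivity)
  have hexpand : x * ((ν - 1) / x + (μ - ν) * x / (x ^ 2 + 1) + deriv g x) =
      (ν - 1) + (μ - ν) * (x ^ 2 / (x ^ 2 + 1)) + x * deriv g x := by
    field_simp
  have h1 : |ν - 1| ≤ 1 := abs_le.2 ⟨by linarith, by linarith⟩
  have h2 : |(μ - ν) * (x ^ 2 / (x ^ 2 + 1))| ≤ 2 :=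
    abs_le.2 ⟨by nlinarith [div_nonneg (sq_nonneg x) (by positivity : (0 : ℝ) ≤ x ^ 2 + 1)],
      by nlinarith⟩
  calc _ ≤ |ν - 1| + |(μ - ν) * (x ^ 2 / (x ^ 2 + 1))| + |x * deriv g x| := by
        rw [hexpand]; exact abs_add_three _ _ _
    _ ≤ 1 + 2 + M := by gcongr
    _ = 3 + M := by ring

lemma abs_deriv_Bfun_div_hInvDeriv_le {p x : ℝ} (hν : 0 < ν) (hνp : ν ≤ p) (hpμ : p ≤ μ)
    (hμ : μ ≤ 2) (hg : Measurable g) (hgM : ∀ x, |g x| ≤ M) (hx : 0 < x)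
    (hgx : DifferentiableAt ℝ g x) (hxg : |x * deriv g x| ≤ M) :
    |deriv (Bfun μ ν g) x / hInvDeriv μ ν g x| ≤
      kappa μ ν g * ((18 + 4 * M) * exp (4 * M)) * x ^ (1 - 4 * p) := by
  have hνμ := hνp.trans hpμ
  have hp : 0 < p := hν.trans_le hνp
  have hp2 : p ≤ 2 := hpμ.trans hμ
  have hH : exp (-M) / 2 * x ^ p ≤ hInv μ ν g x := by
    refine le_trans ?_ (le_hInv hν hνp hpμ hg hgM hx)
    rw [mul_div_right_comm]
    gcongr
  have hbound := abs_neg_mul_add_div_le (kappa_nonneg (g := g) hνμ) hx (by positivity)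
    (exp_pos (-M)) hH (exp_neg_mul_rpow_le_hInvDeriv hνp hpμ hgM hx)
    (abs_mul_logDeriv_hInvDeriv_le hν hνμ hμ hx hxg)
  have hconst : (1 + 2 * (3 + M)) / (exp (-M) / 2 * exp (-M) ^ 3) +
      1 / ((exp (-M) / 2) ^ 2 * exp (-M) ^ 2) = (18 + 4 * M) * exp (4 * M) := by
    rw [exp_neg, show 4 * M = M + M + M + M by ring, exp_add, exp_add, exp_add]
    field_simp
    ring
  rw [hconst] at hbound
  have hB : Bfun μ ν g = fun y => kappa μ ν g / (y * hInv μ ν g y * hInvDeriv μ ν g y ^ 2) := rfl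
  rwa [hB, deriv_div_mul_mul_sq_div (hasDerivAt_hInv hν hνμ hg hgM hx hgx)
    (hasDerivAt_hInvDeriv hx hgx) hx.ne' (lt_of_lt_of_le (by positivity) hH).ne'
    (hInvDeriv_pos hx.ne').ne']

end Derivative

lemma abs_deriv_Bfun_div_hInvDeriv_le_of_ne_zero {μ ν M p x : ℝ} {g : ℝ → ℝ} (hν : 0 < ν)
    (hν1 : ν ≤ 1) (hνp : ν ≤ p) (hpμ : p ≤ μ) (hμ : μ ≤ 2) (hg : Measurable g)
    (heven : ∀ x, g (-x) = g x) (hgM : ∀ x, |g x| ≤ M)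
    (hdg : ∀ x, x ≠ 0 → DifferentiableAt ℝ g x) (hxg : ∀ x, x ≠ 0 → |x * deriv g x| ≤ M)
    (hx : x ≠ 0) :
    |deriv (Bfun μ ν g) x / hInvDeriv μ ν g x| ≤
      kappaBound μ ν M * ((18 + 4 * M) * exp (4 * M)) * |x| ^ (1 - 4 * p) := by
  have hM : 0 ≤ M := (abs_nonneg _).trans (hgM 0)
  have hpos : ∀ y, 0 < y → |deriv (Bfun μ ν g) y / hInvDeriv μ ν g y| ≤
      kappaBound μ ν M * ((18 + 4 * M) * exp (4 * M)) * y ^ (1 - 4 * p) := fun y hy =>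
    (abs_deriv_Bfun_div_hInvDeriv_le hν hνp hpμ hμ hg hgM hy (hdg y hy.ne')
      (hxg y hy.ne')).trans <| by
        gcongr
        exact kappa_le hν hν1 (hνp.trans hpμ) hg hgM
  rcases hx.lt_or_gt with hx | hx
  · rw [← abs_deriv_Bfun_div_hInvDeriv_neg heven, abs_of_neg hx]
    exact hpos _ (neg_pos.2 hx)
  · rw [abs_of_pos hx]
    exact hpos x hx

theorem statement19_general (μ ν : ℝ) (hμ1 : 1 / 2 < μ) (hμ2 : μ ≤ 2) (hν1 : 0 < ν) (hν2 : ν < 1 / 2)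
    (M : ℝ) :
    ∃ c : ℝ, ∀ g : ℝ → ℝ, Continuous g →
      Filter.Tendsto g Filter.atTop (nhds 0) → Filter.Tendsto g Filter.atBot (nhds 0) →
      (∀ x : ℝ, Gfun μ ν g (-x) = Gfun μ ν g x) →
      (∀ x y : ℝ, 0 < y → y ≤ x →
        0 ≤ Gfun μ ν g x - Gfun μ ν g y ∧
        Gfun μ ν g x - Gfun μ ν g y ≤ (μ - ν) * (Real.log (x / y) + 2)) →
      (∀ x : ℝ, |g x| ≤ M) →
      (∀ x : ℝ, x ≠ 0 → DifferentiableAt ℝ g x) →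
      ContinuousOn (deriv g) {(0 : ℝ)}ᶜ →
      (∀ x : ℝ, x ≠ 0 → |x * deriv g x| ≤ M) →
      (∀ x : ℝ, 0 < |x| → |x| ≤ 1 →
        |deriv (Bfun μ ν g) x / hInvDeriv μ ν g x| ≤ c * |x| ^ (1 - 4 * ν)) ∧
      (∀ x : ℝ, 1 ≤ |x| →
        |deriv (Bfun μ ν g) x / hInvDeriv μ ν g x| ≤ c * |x| ^ (1 - 4 * μ)) := by
  refine ⟨kappaBound μ ν M * ((18 + 4 * M) * exp (4 * M)), fun g hc _ _ hG _ hgM hdg _ hxg => ?_⟩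
  have hνμ : ν ≤ μ := by linarith
  have hbound {p : ℝ} (hνp : ν ≤ p) (hpμ : p ≤ μ) {x : ℝ} (hx : x ≠ 0) :=
    abs_deriv_Bfun_div_hInvDeriv_le_of_ne_zero hν1 (by linarith) hνp hpμ hμ2 hc.measurable
      (even_of_Gfun_even hG) hgM hdg hxg hx
  exact ⟨fun x hx _ => hbound le_rfl hνμ (abs_pos.1 hx),
    fun x hx => hbound hνμ le_rfl (abs_pos.1 (by linarith))⟩

/-- Power-law bounds for `b'' = B'/(h⁻¹)'` (used in Section 4): for `g ∈ X₁` continuously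
differentiable off `0` with `‖g‖_∞ ≤ M` and `|x g'(x)| ≤ M`, we have
`|B'(x)/(h⁻¹)'(x)| ≲ |x|^(1−4ν)` for `0 < |x| ≤ 1` and `≲ |x|^(1−4μ)` for `|x| ≥ 1`. -/
theorem statement19 (μ ν : ℝ) (hμ1 : 1 / 2 < μ) (hμ2 : μ ≤ 2) (hν1 : 0 < ν) (hν2 : ν < 1 / 2)
    (M : ℝ) (hM : 0 < M) :
    ∃ c : ℝ, ∀ g : ℝ → ℝ, Continuous g →
      Filter.Tendsto g Filter.atTop (nhds 0) → Filter.Tendsto g Filter.atBot (nhds 0) →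
      (∀ x : ℝ, Gfun μ ν g (-x) = Gfun μ ν g x) →
      (∀ x y : ℝ, 0 < y → y ≤ x →
        0 ≤ Gfun μ ν g x - Gfun μ ν g y ∧
        Gfun μ ν g x - Gfun μ ν g y ≤ (μ - ν) * (Real.log (x / y) + 2)) →
      (∀ x : ℝ, |g x| ≤ M) →
      (∀ x : ℝ, x ≠ 0 → DifferentiableAt ℝ g x) →
      ContinuousOn (deriv g) {(0 : ℝ)}ᶜ →
      (∀ x : ℝ, x ≠ 0 → |x * deriv g x| ≤ M) →
      (∀ x : ℝ, 0 < |x| → |x| ≤ 1 →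
        |deriv (Bfun μ ν g) x / hInvDeriv μ ν g x| ≤ c * |x| ^ (1 - 4 * ν)) ∧
      (∀ x : ℝ, 1 ≤ |x| →
        |deriv (Bfun μ ν g) x / hInvDeriv μ ν g x| ≤ c * |x| ^ (1 - 4 * μ)) :=
  statement19_general μ ν hμ1 hμ2 hν1 hν2 M
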